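/- Let D be a proper subdomain of ℝⁿ and let c ≥ 2. Then v^c_D(z,w) = 2·log(1 + c·|z−w|/√(d_D(z)·d_D(w))) is a distance on D: it is symmetric, nonnegative, vanishes exactly on the diagonal, and satisfies the triangle inequality v^c_D(z,w) ≤ v^c_D(z,u) + v^c_D(u,w) for all z, u, w ∈ D. -/

import Mathlib

noncomputable section

open Metric Set MeasureTheory

/-- The distance from a point to the boundary of `D`. -/
def distBd {E : Type*} [NormedAddCommGroup E] [NormedSpace ℝ E]
    (D : Set E) (z : E) : ℝ := Metric.infDist z (frontier D)

/-- The quasi-hyperbolic distance `h_D(z,w) = inf_γ ∫_γ |du| / d_D(u)`, the infimum being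
taken over all rectifiable (equivalently, Lipschitz) curves in `D` joining `z` to `w`. -/
def qhDist {E : Type*} [NormedAddCommGroup E] [NormedSpace ℝ E]
    (D : Set E) (z w : E) : ℝ :=
  sInf {r : ℝ | ∃ γ : ℝ → E, (∃ K : NNReal, LipschitzOnWith K γ (Set.Icc 0 1)) ∧
    γ 0 = z ∧ γ 1 = w ∧ (∀ t ∈ Set.Icc (0:ℝ) 1, γ t ∈ D) ∧
    r = ∫ t in (0:ℝ)..(1:ℝ), ‖deriv γ t‖ / distBd D (γ t)}

/-- `v^c_D(z,w) = 2 log (1 + c |z-w| / √(d_D(z) d_D(w)))`. -/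
def vDist {E : Type*} [NormedAddCommGroup E] [NormedSpace ℝ E]
    (c : ℝ) (D : Set E) (z w : E) : ℝ :=
  2 * Real.log (1 + c * dist z w / Real.sqrt (distBd D z * distBd D w))

/-- `s_D(z,w) = 2 arsinh (|z-w| / (2 √(d_D(z) d_D(w))))`. -/
def sDist {E : Type*} [NormedAddCommGroup E] [NormedSpace ℝ E]
    (D : Set E) (z w : E) : ℝ :=
  2 * Real.arsinh (dist z w / (2 * Real.sqrt (distBd D z * distBd D w)))

/-- `i_D(z,w) = 2 log ((d_D(z) + d_D(w) + |z-w|) / (2 √(d_D(z) d_D(w))))`. -/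
def iDist {E : Type*} [NormedAddCommGroup E] [NormedSpace ℝ E]
    (D : Set E) (z w : E) : ℝ :=
  2 * Real.log ((distBd D z + distBd D w + dist z w) /
    (2 * Real.sqrt (distBd D z * distBd D w)))

/-- The inverse hyperbolic tangent. -/
def artanh (x : ℝ) : ℝ := (1/2) * Real.log ((1 + x) / (1 - x))

/-- The Lempert function of a domain `D` in a complex normed space. -/
def lempert {F : Type*} [NormedAddCommGroup F] [NormedSpace ℂ F]
    (D : Set F) (z w : F) : ℝ :=
  sInf {r : ℝ | ∃ (α : ℂ) (φ : ℂ → F), ‖α‖ < 1 ∧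
    DifferentiableOn ℂ φ (Metric.ball (0:ℂ) 1) ∧ Set.MapsTo φ (Metric.ball (0:ℂ) 1) D ∧
    φ 0 = z ∧ φ α = w ∧ r = artanh ‖α‖}

/-- The Kobayashi pseudodistance: the largest pseudodistance not exceeding the Lempert
function, i.e. the infimum over finite chains of sums of values of the Lempert function. -/
def kobayashi {F : Type*} [NormedAddCommGroup F] [NormedSpace ℂ F]
    (D : Set F) (z w : F) : ℝ :=
  sInf {r : ℝ | ∃ (N : ℕ) (p : ℕ → F), p 0 = z ∧ p N = w ∧ (∀ j ≤ N, p j ∈ D) ∧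
    r = ∑ j ∈ Finset.range N, lempert D (p j) (p (j+1))}

/-- `a` is a `C¹`-smooth boundary point of `D`: after an affine orthonormal change of
coordinates (encoded by a unit vector `ν` giving the first coordinate `⟪x, ν⟫`), near `a`
the domain is the region above the graph of a `C¹` function `f` of the remaining
coordinates (`f` does not depend on the coordinate along `ν`). -/
def IsC1BoundaryPoint {H : Type*} [NormedAddCommGroup H] [InnerProductSpace ℝ H]
    (D : Set H) (a : H) : Prop :=
  a ∈ frontier D ∧ ∃ (ν : H) (f : H → ℝ) (V : Set H),
    ‖ν‖ = 1 ∧ IsOpen V ∧ a ∈ V ∧ ContDiff ℝ 1 f ∧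
    (∀ (x : H) (t : ℝ), f (x + t • ν) = f x) ∧
    D ∩ V = {x | x ∈ V ∧ f x < (inner ℝ x ν : ℝ)}

/-- `a` is a Dini-smooth boundary point of `D`: a `C¹`-smooth boundary point whose local
graphing function has a Dini-continuous derivative (equivalently, the inner unit normal
is Dini-continuous near `a`): the modulus of continuity `ω` of the derivative satisfies
`∫₀¹ ω(t)/t dt < +∞`. -/
def IsDiniSmoothBoundaryPoint {H : Type*} [NormedAddCommGroup H] [InnerProductSpace ℝ H]
    (D : Set H) (a : H) : Prop :=
  a ∈ frontier D ∧ ∃ (ν : H) (f : H → ℝ) (V : Set H) (ω : ℝ → ℝ),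
    ‖ν‖ = 1 ∧ IsOpen V ∧ a ∈ V ∧ ContDiff ℝ 1 f ∧
    (∀ (x : H) (t : ℝ), f (x + t • ν) = f x) ∧
    D ∩ V = {x | x ∈ V ∧ f x < (inner ℝ x ν : ℝ)} ∧
    (∀ t : ℝ, 0 ≤ ω t) ∧
    (∀ x ∈ V, ∀ y ∈ V, ‖fderiv ℝ f x - fderiv ℝ f y‖ ≤ ω (dist x y)) ∧
    MeasureTheory.IntegrableOn (fun t => ω t / t) (Set.Ioc (0:ℝ) 1)

/-- `a` is a `C^{1+ε}`-smooth boundary point of `D`: a `C¹`-smooth boundary point whose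
local graphing function has an `ε`-Hölder continuous derivative. -/
def IsC1epsBoundaryPoint {H : Type*} [NormedAddCommGroup H] [InnerProductSpace ℝ H]
    (ε : ℝ) (D : Set H) (a : H) : Prop :=
  a ∈ frontier D ∧ ∃ (ν : H) (f : H → ℝ) (V : Set H) (C : ℝ),
    ‖ν‖ = 1 ∧ IsOpen V ∧ a ∈ V ∧ ContDiff ℝ 1 f ∧
    (∀ (x : H) (t : ℝ), f (x + t • ν) = f x) ∧
    D ∩ V = {x | x ∈ V ∧ f x < (inner ℝ x ν : ℝ)} ∧
    (∀ x ∈ V, ∀ y ∈ V, ‖fderiv ℝ f x - fderiv ℝ f y‖ ≤ C * dist x y ^ ε)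

/-! The boundary distance `d_D` is `1`-Lipschitz, so for `t = √d_D(u)` and `s = √d_D(z)` one gets
`t² - s t ≤ |z - u|`. Clearing denominators in `1 + c|z-w|/(s r) ≤ (1 + c|z-u|/(s t))(1 + c|u-w|/(t r))`
and using `|z - w| ≤ |z - u| + |u - w|` reduces the triangle inequality for `v^c_D` to
`|z-u| (t² - t r) + |u-w| (t² - s t) ≤ c |z-u| |u-w|`; the left side is at most `2 |z-u| |u-w|`,
whence `c ≥ 2`. -/

lemma sub_sqrt_mul_sqrt_le {p q m : ℝ} (hm : 0 ≤ m) (h : p - q ≤ m) : p - √p * √q ≤ m := by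
  rcases le_total p q with hpq | hqp
  · rcases le_total 0 p with hp | hp
    · nlinarith [Real.sq_sqrt hp, Real.sqrt_nonneg p, Real.sqrt_le_sqrt hpq]
    · rw [Real.sqrt_eq_zero_of_nonpos hp, zero_mul, sub_zero]; linarith
  · rcases le_total 0 q with hq | hq
    · nlinarith [Real.sq_sqrt hq, Real.sqrt_nonneg q, Real.sqrt_le_sqrt hqp]
    · rw [Real.sqrt_eq_zero_of_nonpos hq, mul_zero, sub_zero]; linarith

lemma one_add_div_le_mul_one_add_div {s t r a b d c : ℝ} (hs : 0 < s) (ht : 0 < t) (hr : 0 < r)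
    (ha : 0 ≤ a) (hb : 0 ≤ b) (hc : 2 ≤ c) (hd : d ≤ a + b)
    (hat : t * t - s * t ≤ a) (hbt : t * t - t * r ≤ b) :
    1 + c * d / (s * r) ≤ (1 + c * a / (s * t)) * (1 + c * b / (t * r)) := by
  have key : d * (t * t) ≤ a * (t * r) + b * (s * t) + c * (a * b) := by
    nlinarith [mul_le_mul_of_nonneg_left hbt ha, mul_le_mul_of_nonneg_left hat hb,
      mul_nonneg ha hb, mul_le_mul_of_nonneg_right hd (mul_pos ht ht).le]
  rw [one_add_div (by positivity), one_add_div (by positivity), one_add_div (by positivity),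
    div_mul_div_comm, div_le_div_iff₀ (by positivity) (by positivity)]
  nlinarith [mul_le_mul_of_nonneg_left key (by positivity : 0 ≤ c * (s * r)),
    mul_nonneg (mul_nonneg ha hb) (mul_pos hs hr).le]

lemma LipschitzWith.one_add_div_sqrt_le_mul {X : Type*} [PseudoMetricSpace X] {f : X → ℝ}
    (hf : LipschitzWith 1 f) {c : ℝ} (hc : 2 ≤ c) {x y z : X}
    (hx : 0 < f x) (hy : 0 < f y) (hz : 0 < f z) :
    1 + c * dist x z / √(f x * f z) ≤
      (1 + c * dist x y / √(f x * f y)) * (1 + c * dist y z / √(f y * f z)) := by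
  have hdiff : ∀ a b, f a - f b ≤ dist a b := fun a b =>
    (le_abs_self _).trans (by simpa [Real.dist_eq] using hf.dist_le_mul a b)
  rw [Real.sqrt_mul hx.le, Real.sqrt_mul hx.le, Real.sqrt_mul hy.le]
  have hyy : √(f y) * √(f y) = f y := Real.mul_self_sqrt hy.le
  refine one_add_div_le_mul_one_add_div (Real.sqrt_pos.2 hx) (Real.sqrt_pos.2 hy)
    (Real.sqrt_pos.2 hz) dist_nonneg dist_nonneg hc (dist_triangle x y z) ?_ ?_
  · rw [hyy, mul_comm]
    exact sub_sqrt_mul_sqrt_le dist_nonneg (dist_comm x y ▸ hdiff y x)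
  · rw [hyy]
    exact sub_sqrt_mul_sqrt_le dist_nonneg (hdiff y z)

section vDist

variable {E : Type*} [NormedAddCommGroup E] [NormedSpace ℝ E] {D : Set E} {c : ℝ}

lemma distBd_pos (hD : IsOpen D) (hD' : D ≠ univ) {z : E} (hz : z ∈ D) : 0 < distBd D z := by
  have hfr : (frontier D).Nonempty := by
    rw [nonempty_iff_ne_empty, ne_eq, ← isClopen_iff_frontier_eq_empty, isClopen_iff]
    exact not_or_intro (nonempty_iff_ne_empty.1 ⟨z, hz⟩) hD'
  refine (isClosed_frontier.notMem_iff_infDist_pos hfr).1 fun hzD => ?_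
  exact (hD.frontier_eq ▸ hzD).2 hz

lemma vDist_comm (z w : E) : vDist c D z w = vDist c D w z := by
  rw [vDist, vDist, dist_comm, mul_comm (distBd D z)]

lemma one_le_one_add_div_sqrt (hc : 0 ≤ c) (z w : E) :
    1 ≤ 1 + c * dist z w / √(distBd D z * distBd D w) :=
  le_add_of_nonneg_right (by positivity)

lemma vDist_nonneg (hc : 0 ≤ c) (z w : E) : 0 ≤ vDist c D z w :=
  mul_nonneg zero_le_two (Real.log_nonneg (one_le_one_add_div_sqrt hc z w))

lemma vDist_pos (hc : 0 < c) {z w : E} (hz : 0 < distBd D z) (hw : 0 < distBd D w)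
    (hzw : z ≠ w) : 0 < vDist c D z w := by
  have : 0 < c * dist z w / √(distBd D z * distBd D w) := by
    have := dist_pos.2 hzw
    positivity
  exact mul_pos two_pos (Real.log_pos (by linarith))

lemma vDist_eq_zero_iff (hc : 0 < c) {z w : E} (hz : 0 < distBd D z) (hw : 0 < distBd D w) :
    vDist c D z w = 0 ↔ z = w := by
  refine ⟨fun h => by_contra fun hzw => (vDist_pos hc hz hw hzw).ne' h, ?_⟩
  rintro rfl
  simp [vDist]

lemma vDist_triangle (hc : 2 ≤ c) {z u w : E} (hz : 0 < distBd D z) (hu : 0 < distBd D u)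
    (hw : 0 < distBd D w) : vDist c D z w ≤ vDist c D z u + vDist c D u w := by
  have hc0 : 0 ≤ c := by linarith
  have hpos : ∀ x y : E, 0 < 1 + c * dist x y / √(distBd D x * distBd D y) := fun x y =>
    zero_lt_one.trans_le (one_le_one_add_div_sqrt hc0 x y)
  simp only [vDist]
  rw [← mul_add, ← Real.log_mul (hpos z u).ne' (hpos u w).ne']
  gcongr
  exact (Metric.lipschitz_infDist_pt _).one_add_div_sqrt_le_mul hc hz hu hw

end vDist

theorem statement16_general {n : ℕ} (D : Set (EuclideanSpace ℝ (Fin n)))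
    (hDopen : IsOpen D) (hDproper : D ≠ Set.univ)
    (c : ℝ) (hc : 2 ≤ c) :
    (∀ z ∈ D, ∀ w ∈ D, vDist c D z w = vDist c D w z) ∧
    (∀ z ∈ D, ∀ w ∈ D, 0 ≤ vDist c D z w) ∧
    (∀ z ∈ D, ∀ w ∈ D, (vDist c D z w = 0 ↔ z = w)) ∧
    (∀ z ∈ D, ∀ u ∈ D, ∀ w ∈ D, vDist c D z w ≤ vDist c D z u + vDist c D u w) := by
  have hpos := fun z (hz : z ∈ D) => distBd_pos hDopen hDproper hz
  refine ⟨fun z _ w _ => vDist_comm z w, fun z _ w _ => vDist_nonneg (by linarith) z w,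
    fun z hz w hw => vDist_eq_zero_iff (by linarith) (hpos z hz) (hpos w hw), ?_⟩
  intro z hz u hu w hw
  exact vDist_triangle hc (hpos z hz) (hpos u hu) (hpos w hw)

/-- Let `D` be a proper subdomain of `ℝⁿ` and `c ≥ 2`. Then
`v^c_D(z,w) = 2 log(1 + c |z−w| / √(d_D(z) d_D(w)))` is a distance on `D`: symmetric,
nonnegative, vanishing exactly on the diagonal, and satisfying the triangle inequality. -/
theorem statement16 {n : ℕ} (D : Set (EuclideanSpace ℝ (Fin n)))
    (hDopen : IsOpen D) (hDconn : IsConnected D) (hDproper : D ≠ Set.univ)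
    (c : ℝ) (hc : 2 ≤ c) :
    (∀ z ∈ D, ∀ w ∈ D, vDist c D z w = vDist c D w z) ∧
    (∀ z ∈ D, ∀ w ∈ D, 0 ≤ vDist c D z w) ∧
    (∀ z ∈ D, ∀ w ∈ D, (vDist c D z w = 0 ↔ z = w)) ∧
    (∀ z ∈ D, ∀ u ∈ D, ∀ w ∈ D, vDist c D z w ≤ vDist c D z u + vDist c D u w) :=
  statement16_general D hDopen hDproper c hc
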